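/- For any smooth function u on a domain in S^n and any coordinate function x_α, one has the pointwise identity Δ²(x_α u) = x_α Δ²u + n² x_α u − 2(n+2) x_α Δu − 4⟨∇x_α, ∇u⟩ + 4⟨∇x_α, ∇Δu⟩. -/
import Mathlib


open scoped BigOperators

/-- An abstract setting for the buckling eigenvalue problem on domains of the unit sphere
`S^n ⊂ ℝ^{n+1}` with its induced Riemannian metric.  Here

* `P` is the type of points of `S^n`;
* `C` is the (commutative `ℝ`-algebra of) smooth real valued functions on `S^n`;
* `V` is the (`C`-module of) smooth vector fields on `S^n`;
* `inn v w` is the pointwise Riemannian inner product `⟨v, w⟩` of vector fields;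
* `grad f` is the gradient `∇f` and `lap f` the Laplace–Beltrami operator `Δf`;
* `hessInner f g` is the pointwise inner product `⟨∇²f, ∇²g⟩` of Hessians;
* `x α` is the restriction to `S^n` of the `α`-th Euclidean coordinate of `ℝ^{n+1}`;
* `isDomain Ω` says that `Ω` is a connected bounded domain with smooth boundary `∂Ω`;
* `intOn Ω f` is the integral `∫_Ω f` with respect to the Riemannian measure;
* `clamped Ω u` is the clamped boundary condition `u = ∂u/∂ν = 0` on `∂Ω`
  (`ν` the outward unit normal of `∂Ω`).

The axioms record standard facts: symmetry of the metric, additivity/`ℝ`-linearity of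
the operators and of the integral, the Leibniz rule for `Δ`, the Bochner formula on the
unit sphere (whose Ricci curvature is `(n-1)` times the metric), and the well-known
identities `Δ x_α = -n x_α`, `∇² x_α = -x_α ⟨·,·⟩`, `∑_α x_α² = 1` for the coordinate
functions on the unit sphere. -/
structure SphereSetting (n : ℕ) (P : Type*) (C : Type*) (V : Type*)
    [CommRing C] [Algebra ℝ C] [AddCommGroup V] [Module C V] where
  inn : V → V → C
  grad : C → V
  lap : C → C
  hessInner : C → C → C
  x : Fin (n + 1) → C
  isDomain : Set P → Prop
  intOn : Set P → C → ℝ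
  clamped : Set P → C → Prop
  inn_symm : ∀ v w, inn v w = inn w v
  grad_add : ∀ f g, grad (f + g) = grad f + grad g
  lap_add : ∀ f g, lap (f + g) = lap f + lap g
  intOn_add : ∀ Ω f g, intOn Ω (f + g) = intOn Ω f + intOn Ω g
  intOn_smul : ∀ Ω (c : ℝ) (f : C), intOn Ω (c • f) = c * intOn Ω f
  lap_mul : ∀ f g, lap (f * g) = lap f * g + f * lap g + (2 : ℝ) • inn (grad f) (grad g)
  bochner : ∀ f g, lap (inn (grad f) (grad g)) =
      (2 : ℝ) • hessInner f g + inn (grad f) (grad (lap g)) + inn (grad g) (grad (lap f))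
        + (2 * ((n : ℝ) - 1)) • inn (grad f) (grad g)
  lap_coord : ∀ α, lap (x α) = -((n : ℝ) • x α)
  hessInner_coord : ∀ α g, hessInner (x α) g = -(x α * lap g)
  coord_sum_sq : ∑ α, x α * x α = 1

namespace SphereSetting

variable {n : ℕ} {P C V : Type*} [CommRing C] [Algebra ℝ C]
  [AddCommGroup V] [Module C V]

/-- `Λ` is a buckling eigenvalue of the domain `Ω`: there is a nontrivial solution of
`Δ²u = -Λ Δu` in `Ω` with `u = ∂u/∂ν = 0` on `∂Ω`. -/
def IsEigenvalue (S : SphereSetting n P C V) (Ω : Set P) (Λ : ℝ) : Prop :=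
  ∃ u : C, u ≠ 0 ∧ S.clamped Ω u ∧ S.lap (S.lap u) = -(Λ • S.lap u)

/-- `(Λ₁, u)` is a first buckling eigenpair of `Ω`: `u` is a nontrivial clamped solution of
`Δ²u = -Λ₁ Δu` and `Λ₁` is the smallest buckling eigenvalue of `Ω`. -/
def IsFirstEigenpair (S : SphereSetting n P C V) (Ω : Set P) (Λ₁ : ℝ) (u : C) : Prop :=
  u ≠ 0 ∧ S.clamped Ω u ∧ S.lap (S.lap u) = -(Λ₁ • S.lap u) ∧
    ∀ Λ : ℝ, S.IsEigenvalue Ω Λ → Λ₁ ≤ Λ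

/-- `Λ₁` is the first (smallest) buckling eigenvalue of `Ω`. -/
def IsFirstEigenvalue (S : SphereSetting n P C V) (Ω : Set P) (Λ₁ : ℝ) : Prop :=
  ∃ u : C, S.IsFirstEigenpair Ω Λ₁ u

/-- `Λ₂` is the second buckling eigenvalue of `Ω` (with first eigenvalue `Λ₁`): it is a
buckling eigenvalue, `Λ₁ ≤ Λ₂`, and it satisfies the Rayleigh–Ritz variational
characterization `Λ₂ ≤ ∫_Ω φ Δ²φ / ∫_Ω |∇φ|²` over all nontrivial clamped trial
functions `φ` with `∫_Ω ⟨∇φ, ∇u₁⟩ = 0` for a first eigenfunction `u₁`. -/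
def IsSecondEigenvalue (S : SphereSetting n P C V) (Ω : Set P) (Λ₁ Λ₂ : ℝ) : Prop :=
  S.IsFirstEigenvalue Ω Λ₁ ∧ S.IsEigenvalue Ω Λ₂ ∧ Λ₁ ≤ Λ₂ ∧
    ∀ u₁ φ : C, S.IsFirstEigenpair Ω Λ₁ u₁ → φ ≠ 0 → S.clamped Ω φ →
      S.intOn Ω (S.inn (S.grad φ) (S.grad u₁)) = 0 →
      Λ₂ * S.intOn Ω (S.inn (S.grad φ) (S.grad φ)) ≤ S.intOn Ω (φ * S.lap (S.lap φ))

end SphereSetting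

open SphereSetting

variable {n : ℕ} {P C V : Type*} [CommRing C] [Algebra ℝ C]
  [AddCommGroup V] [Module C V]

/-- Pointwise identity on `S^n`:
`Δ²(x_α u) = x_α Δ²u + n² x_α u - 2(n+2) x_α Δu - 4⟨∇x_α, ∇u⟩ + 4⟨∇x_α, ∇Δu⟩` for every
smooth function `u` and every coordinate function `x_α`. -/
theorem bilap_coord_mul
    (S : SphereSetting n P C V) (u : C) (α : Fin (n + 1)) :
    S.lap (S.lap (S.x α * u)) =
      S.x α * S.lap (S.lap u) + ((n : ℝ) ^ 2) • (S.x α * u)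
        - (2 * ((n : ℝ) + 2)) • (S.x α * S.lap u)
        - (4 : ℝ) • S.inn (S.grad (S.x α)) (S.grad u)
        + (4 : ℝ) • S.inn (S.grad (S.x α)) (S.grad (S.lap u)) := by
  have lap0 : S.lap 0 = 0 := by
    have h := S.lap_add 0 0
    rw [add_zero] at h
    nth_rewrite 1 [← add_zero (S.lap 0)] at h
    exact (add_left_cancel h).symm
  have lap_neg : ∀ f : C, S.lap (-f) = -S.lap f := by
    intro f
    have h := S.lap_add f (-f)
    rw [add_neg_cancel, lap0] at h
    exact eq_neg_of_add_eq_zero_right h.symm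
  have lap_nat : ∀ (m : ℕ) (f : C),
      S.lap (algebraMap ℝ C (m : ℝ) * f) = algebraMap ℝ C (m : ℝ) * S.lap f := by
    intro m
    induction m with
    | zero => intro f; simp [lap0]
    | succ k ih =>
        intro f
        rw [show ((k + 1 : ℕ) : ℝ) = (k : ℝ) + 1 by push_cast; ring, map_add, map_one,
          add_mul, one_mul, S.lap_add, ih, add_mul, one_mul]
  have lap_two : ∀ f : C, S.lap ((2 : C) * f) = (2 : C) * S.lap f := by
    intro f
    have h := lap_nat 2 f
    rw [show ((2 : ℕ) : ℝ) = (2 : ℝ) by norm_num, map_ofNat] at h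
    exact h
  set N : C := algebraMap ℝ C (n : ℝ) with hN
  have smul_eq : ∀ (c : ℝ) (f : C), c • f = algebraMap ℝ C c * f :=
    fun c f => Algebra.smul_def c f
  have lapN : ∀ f : C, S.lap (N * f) = N * S.lap f := fun f => lap_nat n f
  have hlapX : S.lap (S.x α) = -(N * S.x α) := by
    rw [S.lap_coord α, smul_eq]
  -- abbreviations (plain lets to keep statements readable)
  have h1 : S.lap (S.x α * u) =
      -(N * (S.x α * u)) + S.x α * S.lap u
        + 2 * S.inn (S.grad (S.x α)) (S.grad u) := by
    rw [S.lap_mul (S.x α) u, hlapX, smul_eq, map_ofNat]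
    ring
  have h4 : S.lap (S.x α * S.lap u) =
      -(N * (S.x α * S.lap u)) + S.x α * S.lap (S.lap u)
        + 2 * S.inn (S.grad (S.x α)) (S.grad (S.lap u)) := by
    rw [S.lap_mul (S.x α) (S.lap u), hlapX, smul_eq, map_ofNat]
    ring
  have h9 : S.lap (S.lap (S.x α)) = N * (N * S.x α) := by
    rw [hlapX, lap_neg, lapN, hlapX]
    ring
  have h8 : S.lap (u * S.lap (S.x α)) = -(N * S.lap (S.x α * u)) := by
    rw [hlapX, show u * -(N * S.x α) = -(N * (S.x α * u)) by ring, lap_neg, lapN]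
  have h7 : (2 : C) * S.inn (S.grad u) (S.grad (S.lap (S.x α))) =
      S.lap (u * S.lap (S.x α)) - S.lap u * S.lap (S.x α)
        - u * S.lap (S.lap (S.x α)) := by
    have h := S.lap_mul u (S.lap (S.x α))
    rw [smul_eq, map_ofNat] at h
    rw [h]
    ring
  have h7' : (2 : C) * S.inn (S.grad u) (S.grad (S.lap (S.x α))) =
      -((2 : C) * (N * S.inn (S.grad (S.x α)) (S.grad u))) := by
    rw [h7, h8, h9, h1, hlapX, S.inn_symm (S.grad (S.x α)) (S.grad u)]
    ring
  have h6 : S.lap (S.inn (S.grad (S.x α)) (S.grad u)) =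
      -((2 : C) * (S.x α * S.lap u)) + S.inn (S.grad (S.x α)) (S.grad (S.lap u))
        + S.inn (S.grad u) (S.grad (S.lap (S.x α)))
        + (2 * N - 2) * S.inn (S.grad (S.x α)) (S.grad u) := by
    have h := S.bochner (S.x α) u
    rw [S.hessInner_coord α u, smul_eq, smul_eq, map_ofNat,
      show (2 : ℝ) * ((n : ℝ) - 1) = 2 * (n : ℝ) - 2 by ring, map_sub, map_mul, map_ofNat,
      ← hN] at h
    rw [h]
    ring
  have h2 : S.lap (S.lap (S.x α * u)) =
      S.lap (-(N * (S.x α * u))) + S.lap (S.x α * S.lap u)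
        + S.lap ((2 : C) * S.inn (S.grad (S.x α)) (S.grad u)) := by
    rw [h1, S.lap_add, S.lap_add]
  rw [h2, show S.lap (-(N * (S.x α * u))) = -(N * S.lap (S.x α * u)) by rw [lap_neg, lapN],
    h1, h4, lap_two, smul_eq, smul_eq, smul_eq, smul_eq,
    show ((n : ℝ) ^ 2 : ℝ) = (n : ℝ) * (n : ℝ) by ring,
    show (2 : ℝ) * ((n : ℝ) + 2) = 2 * (n : ℝ) + 4 by ring]
  simp only [map_mul, map_add, map_ofNat, ← hN]
  linear_combination (2 : C) * h6 + h7'
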